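/- In the reduction from 2P2N-3SAT: if M is a 0-1 timed matching of size m + d in the constructed temporal graph, then the assignment setting v_i false when e_{a_i b_i} ∈ M and v_i true when e_{a_i b̄_i} ∈ M is well-defined on all variables and satisfies every clause of Ψ. -/
import Mathlib


/-- Nodes of the temporal graph constructed from a 2P2N-3SAT instance with `m`
variables and `d` clauses: clause nodes `c_l`, variable nodes `a_i`, and literal
nodes `lit i true = b_i`, `lit i false = b̄_i`. -/
inductive SatNode (m d : ℕ) : Type
  | clause : Fin d → SatNode m d
  | avar : Fin m → SatNode m d
  | lit : Fin m → Bool → SatNode m d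
deriving DecidableEq

/-- Edges of the constructed temporal graph: variable edges `a_i – (b_i / b̄_i)`,
and clause edges `c_l – (b_i / b̄_i)`. -/
inductive SatEdge (m d : ℕ) : Type
  | var : Fin m → Bool → SatEdge m d
  | cl : Fin d → Fin m → Bool → SatEdge m d
deriving DecidableEq

/-- Endpoints of an edge. -/
def SatEdge.ends {m d : ℕ} : SatEdge m d → SatNode m d × SatNode m d
  | .var i s => (.avar i, .lit i s)
  | .cl l i s => (.clause l, .lit i s)

/-- The set of timesteps at which an edge exists: variable edges exist on `[0, d)`,
the clause edge of clause `l` exists on `[l, l+1)`. -/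
def SatEdge.tset {m d : ℕ} : SatEdge m d → Set ℕ
  | .var _ _ => Set.Ico 0 d
  | .cl l _ _ => Set.Ico (l : ℕ) ((l : ℕ) + 1)

/-- Two distinct edges overlap iff they share an endpoint and exist at a common time. -/
def SatEdge.Overlaps {m d : ℕ} (e f : SatEdge m d) : Prop :=
  e ≠ f ∧
    (e.ends.1 = f.ends.1 ∨ e.ends.1 = f.ends.2 ∨ e.ends.2 = f.ends.1 ∨
      e.ends.2 = f.ends.2) ∧
    (e.tset ∩ f.tset).Nonempty

/-- The edge set of the temporal graph constructed from the formula `lit`. -/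
def satEdgeSet (m d : ℕ) (lit : Fin d → Fin 3 → Fin m × Bool) : Set (SatEdge m d) :=
  {e | ∃ i s, e = SatEdge.var i s} ∪
    {e | ∃ l i s, e = SatEdge.cl l i s ∧ ∃ k, lit l k = (i, s)}

/-- Reduction from 2P2N-3SAT, backward direction: if `M` is a 0-1 timed matching of
size `m + d` in the constructed temporal graph, then the truth assignment `σ` setting
`v_i` false when `a_i – b_i ∈ M` and `v_i` true when `a_i – b̄_i ∈ M` is well-defined
on all variables and satisfies every clause of the formula. -/
theorem stmt9 (m d : ℕ) (hd : 0 < d) (lit : Fin d → Fin 3 → Fin m × Bool)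
    (h2p2n : ∀ v : Fin m, ∀ s : Bool,
      {p : Fin d × Fin 3 | lit p.1 p.2 = (v, s)}.ncard = 2)
    (M : Set (SatEdge m d)) (hME : M ⊆ satEdgeSet m d lit)
    (hM : ∀ e ∈ M, ∀ f ∈ M, ¬ SatEdge.Overlaps e f)
    (hcard : M.ncard = m + d) :
    ∃ σ : Fin m → Bool,
      (∀ i : Fin m,
        (SatEdge.var i true ∈ M ↔ σ i = false) ∧
        (SatEdge.var i false ∈ M ↔ σ i = true)) ∧
      ∀ l : Fin d, ∃ k : Fin 3, σ (lit l k).1 = (lit l k).2 := by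
  classical
  have hMfin : M.Finite := by
    by_contra h
    rw [Set.Infinite.ncard (by simpa using h)] at hcard
    omega
  set φ : SatEdge m d → Fin m ⊕ Fin d := fun e => match e with
    | .var i _ => Sum.inl i
    | .cl l _ _ => Sum.inr l with hφ
  have hinj : Set.InjOn φ M := by
    intro e he f hf hef
    by_contra hne
    apply hM e he f hf
    match e, f with
    | .var i s, .var i' s' =>
      simp only [φ, Sum.inl.injEq] at hef
      subst hef
      exact ⟨hne, Or.inl rfl, ⟨0, by simp [SatEdge.tset, hd]⟩⟩
    | .cl l i s, .cl l' i' s' =>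
      simp only [φ, Sum.inr.injEq] at hef
      subst hef
      exact ⟨hne, Or.inl rfl, ⟨(l : ℕ), by simp [SatEdge.tset]⟩⟩
    | .var _ _, .cl _ _ _ => simp [φ] at hef
    | .cl _ _ _, .var _ _ => simp [φ] at hef
  have himg : φ '' M = Set.univ := by
    apply Set.eq_of_subset_of_ncard_le (Set.subset_univ _)
    rw [Set.ncard_univ, Set.ncard_image_of_injOn hinj, hcard]
    simp [Nat.card_eq_fintype_card]
  have hvar : ∀ i : Fin m, ∃ s, SatEdge.var i s ∈ M := by
    intro i
    have : Sum.inl i ∈ φ '' M := himg ▸ Set.mem_univ _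
    obtain ⟨e, he, hee⟩ := this
    match e with
    | .var i' s =>
      simp only [φ, Sum.inl.injEq] at hee
      subst hee
      exact ⟨s, he⟩
    | .cl _ _ _ => simp [φ] at hee
  have hcl : ∀ l : Fin d, ∃ i s, SatEdge.cl l i s ∈ M := by
    intro l
    have : Sum.inr l ∈ φ '' M := himg ▸ Set.mem_univ _
    obtain ⟨e, he, hee⟩ := this
    match e with
    | .var _ _ => simp [φ] at hee
    | .cl l' i s =>
      simp only [φ, Sum.inr.injEq] at hee
      subst hee
      exact ⟨i, s, he⟩
  have hnotboth : ∀ i : Fin m,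
      ¬ (SatEdge.var i true ∈ M ∧ SatEdge.var i false ∈ M) := by
    rintro i ⟨h1, h2⟩
    exact hM _ h1 _ h2 ⟨by simp, Or.inl rfl, ⟨0, by simp [SatEdge.tset, hd]⟩⟩
  refine ⟨fun i => if SatEdge.var i false ∈ M then true else false, ?_, ?_⟩
  · intro i
    by_cases hf : SatEdge.var i false ∈ M
    · simp only [hf, if_pos]
      refine ⟨⟨fun h => absurd ⟨h, hf⟩ (hnotboth i), by simp⟩, by simp [hf]⟩
    · simp only [hf, if_neg]
      obtain ⟨s, hs⟩ := hvar i
      cases s with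
      | false => exact absurd hs hf
      | true => exact ⟨by simp [hs], by simp [hf]⟩
  · intro l
    obtain ⟨i, s, he⟩ := hcl l
    have hmem := hME he
    have hk : ∃ k, lit l k = (i, s) := by
      rcases hmem with h | h
      · obtain ⟨i', s', h⟩ := h
        simp at h
      · obtain ⟨l', i', s', h, k, hk⟩ := h
        simp only [SatEdge.cl.injEq] at h
        obtain ⟨rfl, rfl, rfl⟩ := h
        exact ⟨k, hk⟩
    obtain ⟨k, hk⟩ := hk
    refine ⟨k, ?_⟩
    rw [hk]
    obtain ⟨s', hs'⟩ := hvar i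
    have hss' : s' ≠ s := by
      intro hss
      subst hss
      exact hM _ he _ hs' ⟨by simp, Or.inr (Or.inr (Or.inr rfl)),
        ⟨(l : ℕ), by simp [SatEdge.tset, l.isLt]⟩⟩
    cases s with
    | true =>
      have : s' = false := by cases s' <;> simp_all
      subst this
      simp [hs']
    | false =>
      have : s' = true := by cases s' <;> simp_all
      subst this
      have hf : SatEdge.var i false ∉ M := fun h => hnotboth i ⟨hs', h⟩
      simp [hf]
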